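/- For the binary memory-with-stuck-at-faults channel with state S ∈ {0,1,2}, W_S(0)=W_S(1)=σ/2, W_S(2)=1−σ, input X ∈ {0,1} and output G = S if S ∈ {0,1} and G = X if S = 2: if T is any finite random variable independent of S and X is any function of (T,S), then I(T;G) ≤ 1 − h(σ/2), where h is the binary entropy function. -/

import Mathlib

open scoped BigOperators Classical
open Finset

noncomputable section

/-- A probability mass function on a finite alphabet. -/
def IsPMF {α : Type*} [Fintype α] (p : α → ℝ) : Prop :=
  (∀ a, 0 ≤ p a) ∧ ∑ a, p a = 1

/-- Shannon entropy (base 2) of a PMF on a finite alphabet. -/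
def ent {α : Type*} [Fintype α] (p : α → ℝ) : ℝ :=
  -∑ a, p a * Real.logb 2 (p a)

/-- Pushforward of a PMF along a map (distribution of a random variable). -/
def pf {Ω T : Type*} [Fintype Ω] (p : Ω → ℝ) (f : Ω → T) : T → ℝ :=
  fun t => ∑ ω, if f ω = t then p ω else 0

/-- Mutual information of a joint PMF on a product alphabet. -/
def mi2 {α β : Type*} [Fintype α] [Fintype β] (p : α × β → ℝ) : ℝ :=
  ent (fun a => ∑ b, p (a, b)) + ent (fun b => ∑ a, p (a, b)) - ent p

/-- Conditional entropy H(β | α) for a joint PMF on α × β. -/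
def condEnt {α β : Type*} [Fintype α] [Fintype β] (p : α × β → ℝ) : ℝ :=
  ent p - ent (fun a => ∑ b, p (a, b))

/-- Conditional mutual information I(β; γ | α) for a joint PMF on α × β × γ. -/
def cmi {α β γ : Type*} [Fintype α] [Fintype β] [Fintype γ] (p : α × β × γ → ℝ) : ℝ :=
  ent (fun ab : α × β => ∑ c, p (ab.1, ab.2, c))
    + ent (fun ac : α × γ => ∑ b, p (ac.1, b, ac.2))
    - ent p - ent (fun a => ∑ b, ∑ c, p (a, b, c))

/-- Total variation distance between two PMFs on a finite alphabet. -/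
def tv {α : Type*} [Fintype α] (p q : α → ℝ) : ℝ :=
  (∑ a, |p a - q a|) / 2

/-- The memory-with-stuck-at-faults channel: output equals the state when the state is
`0` or `1` (encoded as `false`/`true`), and equals the input when the state is `2`. -/
def msaf (s : Fin 3) (x : Bool) : Bool :=
  if s = 0 then false else if s = 1 then true else x

/-- Binary entropy function (base 2). -/
def binEnt (t : ℝ) : ℝ := -t * Real.logb 2 t - (1 - t) * Real.logb 2 (1 - t)

/-
Given `T = t`, the output is `0` with probability `σ/2`, `1` with probability `σ/2`, and the fixed
bit `x t 2` with probability `1 − σ`; so it is Bernoulli with parameter `σ/2` or `1 − σ/2`, and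
`H(G | T) = h(σ/2)` whatever the encoder does. Hence `I(T;G) = H(G) − h(σ/2) ≤ 1 − h(σ/2)`, since
a binary output has entropy at most one bit.
-/

open Real

section Entropy

variable {α β : Type*} [Fintype α] [Fintype β]

lemma ent_eq_sum_negMulLog (p : α → ℝ) : ent p = (∑ a, negMulLog (p a)) / log 2 := by
  simp only [ent, negMulLog, logb, neg_mul, Finset.sum_neg_distrib, neg_div, Finset.sum_div,
    mul_div_assoc]

lemma binEnt_eq_binEntropy_div (t : ℝ) : binEnt t = binEntropy t / log 2 := by
  rw [binEntropy_eq_negMulLog_add_negMulLog_one_sub, binEnt, negMulLog, negMulLog, logb, logb]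
  ring

lemma binEnt_one_sub (t : ℝ) : binEnt (1 - t) = binEnt t := by
  rw [binEnt_eq_binEntropy_div, binEnt_eq_binEntropy_div, binEntropy_one_sub]

lemma binEnt_le_one (t : ℝ) : binEnt t ≤ 1 := by
  rw [binEnt_eq_binEntropy_div, div_le_one (log_pos one_lt_two)]
  exact binEntropy_le_log_two

lemma ent_bool {r : Bool → ℝ} (hr : r false + r true = 1) : ent r = binEnt (r true) := by
  rw [ent_eq_sum_negMulLog, binEnt_eq_binEntropy_div, binEntropy_eq_negMulLog_add_negMulLog_one_sub,
    Fintype.sum_bool, ← eq_sub_of_add_eq hr, add_comm]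

lemma ent_bool_le_one {r : Bool → ℝ} (hr : r false + r true = 1) : ent r ≤ 1 :=
  ent_bool hr ▸ binEnt_le_one _

lemma ent_mul_kernel (q : α → ℝ) (k : α → β → ℝ) (hk : ∀ a, ∑ b, k a b = 1) :
    ent (fun ab : α × β => q ab.1 * k ab.1 ab.2) = ent q + ∑ a, q a * ent (k a) := by
  simp only [ent_eq_sum_negMulLog, Fintype.sum_prod_type, negMulLog_mul, Finset.sum_add_distrib,
    ← Finset.sum_mul, hk, one_mul, Finset.mul_sum, mul_div_assoc', ← Finset.sum_div, add_div]

lemma mi2_mul_kernel (q : α → ℝ) (k : α → β → ℝ) (hk : ∀ a, ∑ b, k a b = 1) :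
    mi2 (fun ab : α × β => q ab.1 * k ab.1 ab.2)
      = ent (fun b => ∑ a, q a * k a b) - ∑ a, q a * ent (k a) := by
  simp only [mi2, ent_mul_kernel q k hk, ← Finset.mul_sum, hk, mul_one]
  ring

end Entropy

section Pushforward

variable {Ω S T G : Type*} [Fintype Ω] [Fintype S] [Fintype T]

lemma sum_pf [Fintype G] (p : Ω → ℝ) (f : Ω → G) : ∑ g, pf p f g = ∑ ω, p ω := by
  simp only [pf]
  rw [Finset.sum_comm]
  simp

lemma pf_prod_mk (q : T → ℝ) (W : S → ℝ) (f : T → S → G) :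
    pf (fun ts : T × S => q ts.1 * W ts.2) (fun ts => (ts.1, f ts.1 ts.2))
      = fun tg => q tg.1 * pf W (f tg.1) tg.2 := by
  ext ⟨t, g⟩
  simp only [pf, Fintype.sum_prod_type, Prod.mk.injEq, Finset.mul_sum, mul_ite, mul_zero]
  rw [Finset.sum_eq_single t (fun t' _ ht' => by simp [ht']) (by simp)]
  simp

end Pushforward

lemma ent_pf_msaf {σ : ℝ} {WS : Fin 3 → ℝ} (hWS0 : WS 0 = σ / 2) (hWS1 : WS 1 = σ / 2)
    (hWS2 : WS 2 = 1 - σ) (y : Fin 3 → Bool) :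
    ent (pf WS fun s => msaf s (y s)) = binEnt (σ / 2) := by
  have hsum : ∑ g, pf WS (fun s => msaf s (y s)) g = 1 := by
    rw [sum_pf, Fin.sum_univ_three, hWS0, hWS1, hWS2]
    ring
  have htrue : pf WS (fun s => msaf s (y s)) true = WS 1 + if y 2 then WS 2 else 0 := by
    simp [pf, Fin.sum_univ_three, msaf]
  rw [ent_bool (by rwa [Fintype.sum_bool, add_comm] at hsum), htrue, hWS1, hWS2]
  cases y 2
  · simp
  · rw [if_pos rfl, ← binEnt_one_sub]
    ring_nf

theorem stmt_19_general {T : Type*} [Fintype T]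
    (σ : ℝ)
    (WS : Fin 3 → ℝ) (hWS0 : WS 0 = σ / 2) (hWS1 : WS 1 = σ / 2) (hWS2 : WS 2 = 1 - σ)
    (qT : T → ℝ) (hqT : IsPMF qT)
    (x : T → Fin 3 → Bool) :
    mi2 (pf (fun ts : T × Fin 3 => qT ts.1 * WS ts.2)
          (fun ts => (ts.1, msaf ts.2 (x ts.1 ts.2))))
      ≤ 1 - binEnt (σ / 2) := by
  have hWS : ∑ s, WS s = 1 := by
    rw [Fin.sum_univ_three, hWS0, hWS1, hWS2]
    ring
  have hk : ∀ t, ∑ g, pf WS (fun s => msaf s (x t s)) g = 1 := fun t => (sum_pf _ _).trans hWS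
  have hG : ∑ g, ∑ t, qT t * pf WS (fun s => msaf s (x t s)) g = 1 := by
    simp only [Finset.sum_comm (γ := Bool), ← Finset.mul_sum, hk, mul_one, hqT.2]
  rw [pf_prod_mk qT WS fun t s => msaf s (x t s), mi2_mul_kernel _ _ hk]
  simp only [ent_pf_msaf hWS0 hWS1 hWS2, ← Finset.sum_mul, hqT.2, one_mul]
  exact sub_le_sub_right (ent_bool_le_one (by rwa [Fintype.sum_bool, add_comm] at hG)) _

/-- for the memory-with-stuck-at-faults channel with state distribution
`W_S(0) = W_S(1) = σ/2`, `W_S(2) = 1 − σ`, any `T ⫫ S` and any input `X = x(T,S)`,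
`I(T;G) ≤ 1 − h(σ/2)`. -/
theorem stmt_19 {T : Type*} [Fintype T]
    (σ : ℝ) (hσ : σ ∈ Set.Ioo (0 : ℝ) 1)
    (WS : Fin 3 → ℝ) (hWS0 : WS 0 = σ / 2) (hWS1 : WS 1 = σ / 2) (hWS2 : WS 2 = 1 - σ)
    (qT : T → ℝ) (hqT : IsPMF qT)
    (x : T → Fin 3 → Bool) :
    mi2 (pf (fun ts : T × Fin 3 => qT ts.1 * WS ts.2)
          (fun ts => (ts.1, msaf ts.2 (x ts.1 ts.2))))
      ≤ 1 - binEnt (σ / 2) :=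
  stmt_19_general σ WS hWS0 hWS1 hWS2 qT hqT x
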